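/- Let V be a finite set with weights μ:V→ℝ≥0, let r ≥ 0, g ≥ 0, and let (R,B) be a pair of subsets of V with Σ_{v∈R} μ(v) ≤ r. Let Ψ be a finite sequence consisting only of SAVE, LOAD, and DELETE transitions of a single processor that is valid starting from (R,B) (i.e., every transition's precondition holds when applied and Σ_{v∈R_t} μ(v) ≤ r holds throughout), and let (R',B') be the configuration it reaches. Then there exists a valid sequence Ψ' starting from (R,B), consisting of a block of SAVE transitions followed by a block of DELETE transitions followed by a block of LOAD transitions, which also reaches (R',B') and whose total cost (the sum of μ(v)·g over its SAVE and LOAD transitions) is at most the total cost of Ψ. -/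

import Mathlib

/-!
Along a sequence of SAVE, LOAD and DELETE transitions the cache only gains values that are in
slow memory and slow memory only gains values that are in the cache. Hence, writing `(R', B')`
for the final configuration, `B ⊆ B' ⊆ B ∪ R` and `R' ⊆ R ∪ B'`, so saving `B' \ B`, then
deleting `R \ R'`, then loading `R' \ R` reaches `(R', B')`. The original sequence saves every
value of `B' \ B` and loads every value of `R' \ R` at least once, which bounds the cost, and the
caches along the new sequence lie inside `R` or `R'`, which both satisfy the memory bound.
-/

namespace MBSP

/-- A transition (pebbling move) of a single processor. -/
inductive Op (ν : Type) where
  | load : ν → Op ν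
  | save : ν → Op ν
  | compute : ν → Op ν
  | delete : ν → Op ν
deriving DecidableEq

/-- An MBSP instance: a DAG with compute weights `ω`, memory weights `μ`,
`P` processors, cache capacity `r`, communication cost `g` and synchronization cost `L`. -/
structure Inst (ν : Type) where
  edge : ν → ν → Prop
  ω : ν → ℝ
  μ : ν → ℝ
  P : ℕ
  r : ℝ
  g : ℝ
  L : ℝ

variable {ν : Type} [DecidableEq ν]

def isSource (I : Inst ν) (v : ν) : Prop := ¬ ∃ u, I.edge u v

def isSink (I : Inst ν) (v : ν) : Prop := ¬ ∃ u, I.edge v u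

def Acyclic (I : Inst ν) : Prop := ∀ v, ¬ Relation.TransGen I.edge v v

def opCost (I : Inst ν) : Op ν → ℝ
  | .load v => I.μ v * I.g
  | .save v => I.μ v * I.g
  | .compute v => I.ω v
  | .delete _ => 0

def applyOp (R B : Finset ν) : Op ν → Finset ν × Finset ν
  | .load v => (insert v R, B)
  | .save v => (R, insert v B)
  | .compute v => (insert v R, B)
  | .delete v => (R.erase v, B)

def opOK (I : Inst ν) (R B : Finset ν) : Op ν → Prop
  | .load v => v ∈ B
  | .save v => v ∈ R
  | .compute v => (∃ u, I.edge u v) ∧ ∀ u, I.edge u v → u ∈ R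
  | .delete _ => True

/-- The memory bound for a cache content `R`. -/
def memOK (I : Inst ν) (R : Finset ν) : Prop := ∑ v ∈ R, I.μ v ≤ I.r

/-- Run a sequence of transitions of one processor on a pair (cache, slow memory). -/
def run (R B : Finset ν) : List (Op ν) → Finset ν × Finset ν
  | [] => (R, B)
  | op :: rest => run (applyOp R B op).1 (applyOp R B op).2 rest

/-- Validity of a sequence of transitions of one processor: every precondition holds
when the transition is applied and the memory bound holds throughout. -/
def seqValid (I : Inst ν) (R B : Finset ν) : List (Op ν) → Prop
  | [] => True
  | op :: rest => opOK I R B op ∧ memOK I (applyOp R B op).1 ∧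
      seqValid I (applyOp R B op).1 (applyOp R B op).2 rest

/-- A superstep: for every processor, a compute phase (computes and deletes),
then a save phase, a delete phase and a load phase. -/
structure Superstep (ν : Type) (P : ℕ) where
  comp : Fin P → List (Op ν)
  save : Fin P → List ν
  del : Fin P → List ν
  load : Fin P → List ν

structure Config (ν : Type) (P : ℕ) where
  R : Fin P → Finset ν
  B : Finset ν

abbrev Schedule (ν : Type) (P : ℕ) := List (Superstep ν P)

variable {P : ℕ}

def compOnly (l : List (Op ν)) : Prop :=
  ∀ op ∈ l, (∃ v, op = Op.compute v) ∨ (∃ v, op = Op.delete v)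

def afterComp (c : Config ν P) (S : Superstep ν P) (p : Fin P) : Finset ν :=
  (run (c.R p) c.B (S.comp p)).1

/-- The shared slow memory after the save phases of all processors. -/
def newB (c : Config ν P) (S : Superstep ν P) : Finset ν :=
  c.B ∪ Finset.univ.biUnion (fun p => (S.save p).toFinset)

def afterDel (c : Config ν P) (S : Superstep ν P) (p : Fin P) : Finset ν :=
  (S.del p).foldl Finset.erase (afterComp c S p)

def afterLoad (c : Config ν P) (S : Superstep ν P) (p : Fin P) : Finset ν :=
  afterDel c S p ∪ (S.load p).toFinset

/-- The configuration reached after executing a superstep. -/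
def stepConfig (c : Config ν P) (S : Superstep ν P) : Config ν P :=
  ⟨fun p => afterLoad c S p, newB c S⟩

/-- Validity of a superstep at a configuration. -/
def ssValid (I : Inst ν) (c : Config ν I.P) (S : Superstep ν I.P) : Prop :=
  (∀ p, compOnly (S.comp p)) ∧
  (∀ p, seqValid I (c.R p) c.B (S.comp p)) ∧
  (∀ p, ∀ v ∈ S.save p, v ∈ afterComp c S p) ∧
  (∀ p, ∀ v ∈ S.load p, v ∈ newB c S) ∧
  (∀ p, memOK I (afterLoad c S p))

def runSched (c : Config ν P) : Schedule ν P → Config ν P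
  | [] => c
  | S :: rest => runSched (stepConfig c S) rest

def schedValidFrom (I : Inst ν) (c : Config ν I.P) : Schedule ν I.P → Prop
  | [] => True
  | S :: rest => ssValid I c S ∧ schedValidFrom I (stepConfig c S) rest

/-- `B` is exactly the set of sources of the DAG. -/
def initB (I : Inst ν) (B : Finset ν) : Prop := ∀ v, v ∈ B ↔ isSource I v

/-- A valid MBSP schedule: starts with empty caches and the sources in slow memory,
every transition is legal and the memory bound holds throughout, and at the end
every sink is in slow memory. -/
def Valid (I : Inst ν) (sched : Schedule ν I.P) : Prop :=
  ∃ B0 : Finset ν, initB I B0 ∧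
    schedValidFrom I ⟨fun _ => ∅, B0⟩ sched ∧
    ∀ v, isSink I v → v ∈ (runSched (⟨fun _ => ∅, B0⟩ : Config ν I.P) sched).B

def listCost (I : Inst ν) (l : List (Op ν)) : ℝ := (l.map (opCost I)).sum

def ioCost (I : Inst ν) (l : List ν) : ℝ := (l.map (fun v => I.μ v * I.g)).sum

/-- The synchronous cost of a superstep. -/
noncomputable def ssCost (I : Inst ν) (S : Superstep ν I.P) : ℝ :=
  (⨆ p : Fin I.P, listCost I (S.comp p)) + (⨆ p : Fin I.P, ioCost I (S.save p)) +
    (⨆ p : Fin I.P, ioCost I (S.load p)) + I.L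

/-- The synchronous cost of a schedule. -/
noncomputable def syncCost (I : Inst ν) (sched : Schedule ν I.P) : ℝ :=
  (sched.map (ssCost I)).sum

/-- Finishing times of the saves in a save phase starting at time `t`. -/
def saveFinishes (I : Inst ν) : ℝ → List ν → List (ν × ℝ)
  | _, [] => []
  | t, v :: rest => (v, t + I.μ v * I.g) :: saveFinishes I (t + I.μ v * I.g) rest

def minSaveTime (entries : List (ν × ℝ)) (v : ν) : Option ℝ :=
  ((entries.filter (fun e => e.1 == v)).map Prod.snd).min?

/-- Finishing time of a load phase: each load waits for the value to be available
in slow memory (time `Γ v`). -/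
def loadFold (I : Inst ν) (Γ : ν → Option ℝ) : ℝ → List ν → ℝ
  | t, [] => t
  | t, v :: rest => loadFold I Γ (max t ((Γ v).getD 0) + I.μ v * I.g) rest

/-- One superstep of the asynchronous execution: updates the finishing time of
every processor and the availability times `Γ` of the values in slow memory. -/
def asyncSS (I : Inst ν) (S : Superstep ν I.P)
    (st : (Fin I.P → ℝ) × (ν → Option ℝ)) : (Fin I.P → ℝ) × (ν → Option ℝ) :=
  let t1 : Fin I.P → ℝ := fun p => st.1 p + listCost I (S.comp p)
  let entries : List (ν × ℝ) :=
    ((List.finRange I.P).map (fun p => saveFinishes I (t1 p) (S.save p))).flatten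
  let Γ' : ν → Option ℝ := fun v => (st.2 v).orElse (fun _ => minSaveTime entries v)
  let t2 : Fin I.P → ℝ := fun p => t1 p + ioCost I (S.save p)
  (fun p => loadFold I Γ' (t2 p) (S.load p), Γ')

def asyncRun (I : Inst ν) (st : (Fin I.P → ℝ) × (ν → Option ℝ)) :
    Schedule ν I.P → (Fin I.P → ℝ) × (ν → Option ℝ)
  | [] => st
  | S :: rest => asyncRun I (asyncSS I S st) rest

/-- The asynchronous cost (makespan) of a schedule. -/
noncomputable def asyncCost (I : Inst ν) (sched : Schedule ν I.P) : ℝ :=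
  ⨆ p : Fin I.P, (asyncRun I (fun _ => (0 : ℝ), fun _ => none) sched).1 p

end MBSP

namespace MBSP

/-- A degenerate instance used to state the communication-phase reordering lemma:
only the memory weights `μ`, the capacity `r` and the communication cost `g` matter
for sequences of SAVE, LOAD and DELETE transitions. -/
def commInst {ν : Type} (μ : ν → ℝ) (r g : ℝ) : Inst ν where
  edge := fun _ _ => False
  ω := fun _ => 0
  μ := μ
  P := 1
  r := r
  g := g
  L := 0

section Communication

variable {ν : Type} {I : Inst ν}

theorem listCost_cons (op : Op ν) (Ψ : List (Op ν)) :
    listCost I (op :: Ψ) = opCost I op + listCost I Ψ := by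
  simp [listCost]

theorem listCost_append (a b : List (Op ν)) :
    listCost I (a ++ b) = listCost I a + listCost I b := by
  simp [listCost]

theorem listCost_saves_deletes_loads (s d l : List ν) :
    listCost I (s.map Op.save ++ d.map Op.delete ++ l.map Op.load) =
      (s.map fun v => I.μ v * I.g).sum + (l.map fun v => I.μ v * I.g).sum := by
  simp [listCost, opCost, Function.comp_def]

theorem memOK_of_subset (hμ : ∀ v, 0 ≤ I.μ v) {R₁ R₂ : Finset ν} (h : R₁ ⊆ R₂)
    (hR₂ : memOK I R₂) : memOK I R₁ :=
  (Finset.sum_le_sum_of_subset_of_nonneg h fun v _ _ => hμ v).trans hR₂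

variable [DecidableEq ν] {R B : Finset ν} {Ψ : List (Op ν)}

theorem run_append (R B : Finset ν) (a b : List (Op ν)) :
    run R B (a ++ b) = run (run R B a).1 (run R B a).2 b := by
  induction a generalizing R B with
  | nil => rfl
  | cons op a ih => exact ih _ _

theorem seqValid_append (R B : Finset ν) (a b : List (Op ν)) :
    seqValid I R B (a ++ b) ↔
      seqValid I R B a ∧ seqValid I (run R B a).1 (run R B a).2 b := by
  induction a generalizing R B with
  | nil => simp [seqValid, run]
  | cons op a ih => simp [seqValid, run, ih, and_assoc]

theorem memOK_run (hR : memOK I R) (hΨ : seqValid I R B Ψ) : memOK I (run R B Ψ).1 := by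
  induction Ψ generalizing R B with
  | nil => exact hR
  | cons op Ψ ih => exact ih hΨ.2.1 hΨ.2.2

theorem subset_run_snd (R B : Finset ν) (Ψ : List (Op ν)) : B ⊆ (run R B Ψ).2 := by
  induction Ψ generalizing R B with
  | nil => exact subset_rfl
  | cons op Ψ ih =>
    refine subset_trans ?_ (ih _ _)
    cases op <;> simp [applyOp, Finset.subset_insert]

theorem run_snd_subset_union (hΨ : ∀ op ∈ Ψ, ∀ v, op ≠ Op.compute v)
    (hvalid : seqValid I R B Ψ) : (run R B Ψ).2 ⊆ B ∪ R := by
  induction Ψ generalizing R B with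
  | nil => exact Finset.subset_union_left
  | cons op Ψ ih =>
    obtain ⟨hop, hrest⟩ := List.forall_mem_cons.1 hΨ
    obtain ⟨hok, -, hvalid⟩ := hvalid
    refine (ih hrest hvalid).trans ?_
    cases op with
    | compute v => exact absurd rfl (hop v)
    | load v =>
      have hv : v ∈ B := hok
      grind [applyOp]
    | save v =>
      have hv : v ∈ R := hok
      grind [applyOp]
    | delete v => exact Finset.union_subset_union subset_rfl (Finset.erase_subset v R)

theorem run_fst_subset_union (hΨ : ∀ op ∈ Ψ, ∀ v, op ≠ Op.compute v)
    (hvalid : seqValid I R B Ψ) : (run R B Ψ).1 ⊆ R ∪ (run R B Ψ).2 := by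
  induction Ψ generalizing R B with
  | nil => exact Finset.subset_union_left
  | cons op Ψ ih =>
    obtain ⟨hop, hrest⟩ := List.forall_mem_cons.1 hΨ
    obtain ⟨hok, -, hvalid⟩ := hvalid
    refine (ih hrest hvalid).trans ?_
    cases op with
    | compute v => exact absurd rfl (hop v)
    | load v =>
      have hv : v ∈ (run R B (Op.load v :: Ψ)).2 := subset_run_snd _ _ _ (hok : v ∈ B)
      grind [run, applyOp]
    | save v => exact Finset.union_subset_union subset_rfl subset_rfl
    | delete v => exact Finset.union_subset_union (Finset.erase_subset v R) subset_rfl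

theorem sum_sdiff_le_add_sum_sdiff_insert {f : ν → ℝ} (hf : ∀ v, 0 ≤ f v) (a : ν)
    (s t : Finset ν) : ∑ v ∈ s \ t, f v ≤ f a + ∑ v ∈ s \ insert a t, f v := by
  by_cases ha : a ∈ s \ t
  · rw [← Finset.sum_erase_add _ _ ha, add_comm, Finset.sdiff_insert]
  · have : s \ t ⊆ s \ insert a t := by grind
    linarith [hf a, Finset.sum_le_sum_of_subset_of_nonneg this fun v _ _ => hf v]

theorem sum_sdiff_run_le_listCost (hμg : ∀ v, 0 ≤ I.μ v * I.g)
    (hΨ : ∀ op ∈ Ψ, ∀ v, op ≠ Op.compute v) :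
    ∑ v ∈ (run R B Ψ).2 \ B, I.μ v * I.g + ∑ v ∈ (run R B Ψ).1 \ R, I.μ v * I.g
      ≤ listCost I Ψ := by
  induction Ψ generalizing R B with
  | nil => simp [run, listCost]
  | cons op Ψ ih =>
    obtain ⟨hop, hrest⟩ := List.forall_mem_cons.1 hΨ
    have ih := ih (R := (applyOp R B op).1) (B := (applyOp R B op).2) hrest
    rw [listCost_cons]
    cases op with
    | compute v => exact absurd rfl (hop v)
    | load v =>
      simp only [run, applyOp, opCost] at ih ⊢
      linarith [sum_sdiff_le_add_sum_sdiff_insert hμg v (run (insert v R) B Ψ).1 R]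
    | save v =>
      simp only [run, applyOp, opCost] at ih ⊢
      linarith [sum_sdiff_le_add_sum_sdiff_insert hμg v (run R (insert v B) Ψ).2 B]
    | delete v =>
      simp only [run, applyOp, opCost] at ih ⊢
      have : (run (R.erase v) B Ψ).1 \ R ⊆ (run (R.erase v) B Ψ).1 \ R.erase v :=
        Finset.sdiff_subset_sdiff subset_rfl (Finset.erase_subset v R)
      linarith [Finset.sum_le_sum_of_subset_of_nonneg this fun v _ _ => hμg v]

theorem run_map_save (R B : Finset ν) (s : List ν) :
    run R B (s.map Op.save) = (R, B ∪ s.toFinset) := by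
  induction s generalizing B with
  | nil => simp [run]
  | cons v s ih =>
    rw [List.map_cons, run, applyOp, ih, List.toFinset_cons, Finset.insert_union_comm]

theorem run_map_delete (R B : Finset ν) (d : List ν) :
    run R B (d.map Op.delete) = (R \ d.toFinset, B) := by
  induction d generalizing R with
  | nil => simp [run]
  | cons v d ih =>
    rw [List.map_cons, run, applyOp, ih, List.toFinset_cons, Finset.sdiff_insert,
      Finset.erase_sdiff_comm]

theorem run_map_load (R B : Finset ν) (l : List ν) :
    run R B (l.map Op.load) = (R ∪ l.toFinset, B) := by
  induction l generalizing R with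
  | nil => simp [run]
  | cons v l ih =>
    rw [List.map_cons, run, applyOp, ih, List.toFinset_cons, Finset.insert_union_comm]

theorem seqValid_map_save (B : Finset ν) {s : List ν} (hs : ∀ v ∈ s, v ∈ R)
    (hR : memOK I R) : seqValid I R B (s.map Op.save) := by
  induction s generalizing B with
  | nil => trivial
  | cons v s ih =>
    obtain ⟨hv, hs⟩ := List.forall_mem_cons.1 hs
    exact ⟨hv, hR, ih _ hs⟩

theorem seqValid_map_delete (hμ : ∀ v, 0 ≤ I.μ v) (B : Finset ν) (d : List ν)
    (hR : memOK I R) : seqValid I R B (d.map Op.delete) := by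
  induction d generalizing R with
  | nil => trivial
  | cons v d ih =>
    have hR' : memOK I (R.erase v) := memOK_of_subset hμ (Finset.erase_subset v R) hR
    exact ⟨trivial, hR', ih hR'⟩

theorem seqValid_map_load (hμ : ∀ v, 0 ≤ I.μ v) {l : List ν} (hl : ∀ v ∈ l, v ∈ B)
    (hR : memOK I (R ∪ l.toFinset)) : seqValid I R B (l.map Op.load) := by
  induction l generalizing R with
  | nil => trivial
  | cons v l ih =>
    obtain ⟨hv, hl⟩ := List.forall_mem_cons.1 hl
    rw [List.toFinset_cons, ← Finset.insert_union_comm] at hR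
    exact ⟨hv, memOK_of_subset hμ Finset.subset_union_left hR, ih hl hR⟩

theorem run_saves_deletes_loads (R B : Finset ν) (s d l : List ν) :
    run R B (s.map Op.save ++ d.map Op.delete ++ l.map Op.load) =
      (R \ d.toFinset ∪ l.toFinset, B ∪ s.toFinset) := by
  rw [run_append, run_append, run_map_save, run_map_delete, run_map_load]

theorem seqValid_saves_deletes_loads (hμ : ∀ v, 0 ≤ I.μ v) {s l : List ν} (d : List ν)
    (hs : ∀ v ∈ s, v ∈ R) (hl : ∀ v ∈ l, v ∈ B ∪ s.toFinset) (hR : memOK I R)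
    (hR' : memOK I (R \ d.toFinset ∪ l.toFinset)) :
    seqValid I R B (s.map Op.save ++ d.map Op.delete ++ l.map Op.load) := by
  rw [seqValid_append, seqValid_append, run_append, run_map_save, run_map_delete]
  exact ⟨⟨seqValid_map_save B hs hR, seqValid_map_delete hμ _ d hR⟩,
    seqValid_map_load hμ hl hR'⟩

end Communication

theorem statement_13_general {ν : Type} [DecidableEq ν]
    (μ : ν → ℝ) (hμ : ∀ v, 0 ≤ μ v) (r g : ℝ) (hg : 0 ≤ g)
    (R B : Finset ν) (hmem : ∑ v ∈ R, μ v ≤ r)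
    (Ψ : List (Op ν)) (hcomm : ∀ op ∈ Ψ, ∀ v : ν, op ≠ Op.compute v)
    (hvalid : seqValid (commInst μ r g) R B Ψ) :
    ∃ s d l : List ν,
      seqValid (commInst μ r g) R B
        (s.map Op.save ++ d.map Op.delete ++ l.map Op.load) ∧
      run R B (s.map Op.save ++ d.map Op.delete ++ l.map Op.load) = run R B Ψ ∧
      listCost (commInst μ r g) (s.map Op.save ++ d.map Op.delete ++ l.map Op.load)
        ≤ listCost (commInst μ r g) Ψ := by
  set R' := (run R B Ψ).1
  set B' := (run R B Ψ).2
  have hmem' : memOK (commInst μ r g) R := hmem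
  have hB' : B ∪ (B' \ B) = B' := Finset.union_sdiff_of_subset (subset_run_snd R B Ψ)
  have hR' : R \ (R \ R') ∪ (R' \ R) = R' := by
    rw [Finset.sdiff_sdiff_self_left, Finset.inter_comm, Finset.union_comm,
      Finset.sdiff_union_inter]
  refine ⟨(B' \ B).toList, (R \ R').toList, (R' \ R).toList, ?_, ?_, ?_⟩
  · refine seqValid_saves_deletes_loads hμ _ (fun v hv => ?_) (fun v hv => ?_)
      hmem' ?_
    · obtain ⟨hvB', hvB⟩ := Finset.mem_sdiff.1 (Finset.mem_toList.1 hv)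
      simpa [hvB] using run_snd_subset_union hcomm hvalid hvB'
    · obtain ⟨hvR', hvR⟩ := Finset.mem_sdiff.1 (Finset.mem_toList.1 hv)
      simpa [hvR, hB'] using run_fst_subset_union hcomm hvalid hvR'
    · rw [Finset.toList_toFinset, Finset.toList_toFinset, hR']
      exact memOK_run hmem' hvalid
  · simp only [run_saves_deletes_loads, Finset.toList_toFinset, hB', hR']
    rfl
  · rw [listCost_saves_deletes_loads, Finset.sum_map_toList, Finset.sum_map_toList]
    exact sum_sdiff_run_le_listCost (fun v => mul_nonneg (hμ v) hg) hcomm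

/-- Any valid sequence `Ψ` of SAVE/LOAD/DELETE transitions of a
single processor starting from a configuration `(R, B)` satisfying the memory bound
can be replaced by a valid sequence consisting of a block of SAVEs, then a block of
DELETEs, then a block of LOADs, reaching the same configuration with total cost at
most that of `Ψ`. -/
theorem statement_13 {ν : Type} [Fintype ν] [DecidableEq ν]
    (μ : ν → ℝ) (hμ : ∀ v, 0 ≤ μ v) (r g : ℝ) (hr : 0 ≤ r) (hg : 0 ≤ g)
    (R B : Finset ν) (hmem : ∑ v ∈ R, μ v ≤ r)
    (Ψ : List (Op ν)) (hcomm : ∀ op ∈ Ψ, ∀ v : ν, op ≠ Op.compute v)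
    (hvalid : seqValid (commInst μ r g) R B Ψ) :
    ∃ s d l : List ν,
      seqValid (commInst μ r g) R B
        (s.map Op.save ++ d.map Op.delete ++ l.map Op.load) ∧
      run R B (s.map Op.save ++ d.map Op.delete ++ l.map Op.load) = run R B Ψ ∧
      listCost (commInst μ r g) (s.map Op.save ++ d.map Op.delete ++ l.map Op.load)
        ≤ listCost (commInst μ r g) Ψ :=
  statement_13_general μ hμ r g hg R B hmem Ψ hcomm hvalid

end MBSP
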